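/- arXiv:1907.01344 — 10 statements merged into one kernel-verified Lean document; each statement's English description precedes it below -/
import Mathlib

section
/- Let X and Y be non-empty profinite spaces (compact, Hausdorff, totally disconnected topological spaces) and let φ : X → Y be a continuous map that is nowhere locally constant, i.e. there is no non-empty open subset U of X such that the restriction of φ to U is constant. Then the image of φ has cardinality at least 2^ℵ₀. -/
/-!
Since `Y` is totally separated, every nonempty clopen `K ⊆ X` on which `φ` is not constant is cut
into two nonempty clopen pieces `K ∩ φ⁻¹ U` and `K \ φ⁻¹ U` by a clopen `U ⊆ Y`. Iterating along a
branch `f : ℕ → Bool` gives a decreasing sequence of nonempty clopen sets, whose intersection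
is nonempty by compactness; points on different branches are separated by the sets `U` at the
depth where the branches part, so `f ↦ φ x_f` injects `2^ℕ` into the range of `φ`.
-/

open Set Cardinal

namespace CantorScheme

variable {X Y : Type*}

def side (U : Set Y) (b : Bool) : Set Y := if b then U else Uᶜ

theorem isClopen_side [TopologicalSpace Y] {U : Set Y} (hU : IsClopen U) (b : Bool) :
    IsClopen (side U b) := by
  cases b
  · exact hU.compl
  · exact hU

theorem disjoint_side {U : Set Y} {b b' : Bool} (h : b ≠ b') :
    Disjoint (side U b) (side U b') := by
  cases b <;> cases b' <;> simp_all [side, disjoint_compl_left, disjoint_compl_right]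

def piece (φ : X → Y) (U : Set X → Set Y) (f : ℕ → Bool) : ℕ → Set X
  | 0 => univ
  | n + 1 => piece φ U f n ∩ φ ⁻¹' side (U (piece φ U f n)) (f n)

variable {φ : X → Y} {U : Set X → Set Y}

theorem piece_succ_subset (f : ℕ → Bool) (n : ℕ) : piece φ U f (n + 1) ⊆ piece φ U f n :=
  inter_subset_left

theorem mapsTo_piece_succ (f : ℕ → Bool) (n : ℕ) :
    MapsTo φ (piece φ U f (n + 1)) (side (U (piece φ U f n)) (f n)) :=
  fun _ hx => hx.2

theorem piece_eq_of_forall_lt {f g : ℕ → Bool} {n : ℕ} (h : ∀ m < n, f m = g m) :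
    piece φ U f n = piece φ U g n := by
  induction n with
  | zero => rfl
  | succ n ih =>
    simp only [piece, ih fun m hm => h m (hm.trans n.lt_succ_self), h n n.lt_succ_self]

/-- Points on different branches have different images: at the first depth `n` where the
branches part, both lie in the same piece `K` and are mapped to opposite sides of `U K`. -/
theorem apply_ne_of_mem_iInter_piece {f g : ℕ → Bool} (hfg : f ≠ g) {x y : X}
    (hx : x ∈ ⋂ n, piece φ U f n) (hy : y ∈ ⋂ n, piece φ U g n) : φ x ≠ φ y := by
  classical
  have hex : ∃ n, f n ≠ g n := Function.ne_iff.mp hfg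
  set n := Nat.find hex
  have hK : piece φ U f n = piece φ U g n :=
    piece_eq_of_forall_lt fun m hm => not_not.mp (Nat.find_min hex hm)
  have hfx := mapsTo_piece_succ f n (mem_iInter.mp hx (n + 1))
  have hgy := mapsTo_piece_succ g n (mem_iInter.mp hy (n + 1))
  rw [← hK] at hgy
  exact (disjoint_side (Nat.find_spec hex)).ne_of_mem hfx hgy

variable [TopologicalSpace X] [TopologicalSpace Y]

def IsSplitting (φ : X → Y) (U : Set X → Set Y) : Prop :=
  ∀ K, IsClopen K → K.Nonempty → IsClopen (U K) ∧ ∀ b, (K ∩ φ ⁻¹' side (U K) b).Nonempty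

theorem isClopen_piece_and_nonempty [Nonempty X] (hφ : Continuous φ)
    (hU : IsSplitting φ U) (f : ℕ → Bool) (n : ℕ) : IsClopen (piece φ U f n) ∧ (piece φ U f n).Nonempty := by
  induction n with
  | zero => exact ⟨isClopen_univ, univ_nonempty⟩
  | succ n ih =>
    obtain ⟨hUK, hne⟩ := hU _ ih.1 ih.2
    exact ⟨ih.1.inter ((isClopen_side hUK _).preimage hφ), hne _⟩

theorem nonempty_iInter_piece [CompactSpace X] [Nonempty X] (hφ : Continuous φ)
    (hU : IsSplitting φ U) (f : ℕ → Bool) : (⋂ n, piece φ U f n).Nonempty :=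
  IsCompact.nonempty_iInter_of_sequence_nonempty_isCompact_isClosed _ (piece_succ_subset f)
    (fun n => (isClopen_piece_and_nonempty hφ hU f n).2) isClosed_univ.isCompact
    (fun n => (isClopen_piece_and_nonempty hφ hU f n).1.isClosed)

end CantorScheme

open CantorScheme

theorem exists_isClopen_splitting {X Y : Type*} [TopologicalSpace Y] [TotallySeparatedSpace Y]
    {φ : X → Y} {K : Set X} (hK : ¬∃ y, ∀ x ∈ K, φ x = y) (hne : K.Nonempty) :
    ∃ U : Set Y, IsClopen U ∧ ∀ b, (K ∩ φ ⁻¹' side U b).Nonempty := by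
  obtain ⟨x₀, hx₀⟩ := hne
  push Not at hK
  obtain ⟨x₁, hx₁, hne⟩ := hK (φ x₀)
  obtain ⟨U, hU, hx₁U, hx₀U⟩ := exists_isClopen_of_totally_separated hne
  refine ⟨U, hU, fun b => ?_⟩
  cases b
  · exact ⟨x₀, hx₀, hx₀U⟩
  · exact ⟨x₁, hx₁, hx₁U⟩

theorem continuum_le_mk_range_of_forall_isClopen {X Y : Type*} [TopologicalSpace X]
    [CompactSpace X] [Nonempty X] [TopologicalSpace Y] [TotallySeparatedSpace Y]
    {φ : X → Y} (hφ : Continuous φ)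
    (h : ∀ K : Set X, IsClopen K → K.Nonempty → ¬∃ y, ∀ x ∈ K, φ x = y) :
    𝔠 ≤ #(range φ) := by
  choose! U hU using fun K hK hne => exists_isClopen_splitting (h K hK hne) hne
  choose x hx using nonempty_iInter_piece (U := U) hφ hU
  have hinj : Function.Injective fun f => (⟨φ (x f), mem_range_self _⟩ : range φ) :=
    fun f g hfg => by_contra fun hne => apply_ne_of_mem_iInter_piece hne (hx f) (hx g)
      (congrArg Subtype.val hfg)
  calc 𝔠 = lift #(ℕ → Bool) := by simp
    _ ≤ lift #(range φ) := lift_mk_le_lift_mk_of_injective hinj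
    _ = #(range φ) := lift_uzero _

theorem stmt0_general {X Y : Type*} [TopologicalSpace X] [CompactSpace X]
    [TopologicalSpace Y] [CompactSpace Y] [T2Space Y]
    [TotallyDisconnectedSpace Y] [Nonempty X]
    (φ : X → Y) (hφ : Continuous φ)
    (h : ∀ U : Set X, IsOpen U → U.Nonempty → ¬∃ y : Y, ∀ x ∈ U, φ x = y) :
    Cardinal.continuum ≤ Cardinal.mk ↥(Set.range φ) := by
  have : TotallySeparatedSpace Y := loc_compact_t2_tot_disc_iff_tot_sep.mp ‹_›
  exact continuum_le_mk_range_of_forall_isClopen hφ fun K hK => h K hK.isOpen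

/-- If `φ : X → Y` is a continuous map between non-empty profinite spaces that is
nowhere locally constant, then its image has cardinality at least `2^ℵ₀`. -/
theorem stmt0 {X Y : Type*} [TopologicalSpace X] [CompactSpace X] [T2Space X]
    [TotallyDisconnectedSpace X] [TopologicalSpace Y] [CompactSpace Y] [T2Space Y]
    [TotallyDisconnectedSpace Y] [Nonempty X]
    (φ : X → Y) (hφ : Continuous φ)
    (h : ∀ U : Set X, IsOpen U → U.Nonempty → ¬∃ y : Y, ∀ x ∈ U, φ x = y) :
    Cardinal.continuum ≤ Cardinal.mk ↥(Set.range φ) :=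
  stmt0_general φ hφ h
end

section
/- Let G be a profinite group and let x ∈ G. If the conjugacy class {x^g : g ∈ G} of x contains fewer than 2^ℵ₀ elements, then it is finite. -/
/-!
The conjugacy class of `x` is the orbit of `x` under the conjugation action of the compact group
`G`, hence compact, and any two of its points are exchanged by a homeomorphism of `G` preserving
it. If it is infinite it has an accumulation point, hence by homogeneity every point is one: the
class is a nonempty perfect compact set. Splitting such a set repeatedly into two disjoint
nonempty perfect pieces gives a Cantor scheme whose branches all have nonempty intersection by
compactness, which embeds `ℕ → Bool` into the class.
-/

open Set Cardinal

namespace CantorScheme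

variable {α : Type*}

theorem inducedMap_fst_eq_univ_of_isCompact [TopologicalSpace α] {β : Type*} {A : List β → Set α}
    (hanti : CantorScheme.Antitone A) (hcomp : IsCompact (A [])) (hclosed : ∀ l, IsClosed (A l))
    (hne : ∀ l, (A l).Nonempty) : (inducedMap A).1 = Set.univ :=
  eq_univ_of_forall fun x =>
    hcomp.nonempty_iInter_of_sequence_nonempty_isCompact_isClosed (fun n => A (PiNat.res x n))
      (fun _ => hanti _ _) (fun _ => hne _) (fun _ => hclosed _)

theorem continuum_le_mk_of_inducedMap_fst_eq_univ {A : List Bool → Set α}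
    (hdom : (inducedMap A).1 = Set.univ) (hdisj : CantorScheme.Disjoint A) : 𝔠 ≤ #(A []) := by
  let f : (ℕ → Bool) → A [] := fun x => ⟨(inducedMap A).2 ⟨x, hdom ▸ mem_univ x⟩, map_mem _ 0⟩
  have hf : Function.Injective f := fun x y hxy =>
    Subtype.mk.inj (hdisj.map_injective (Subtype.mk.inj hxy))
  simpa [mk_arrow, two_power_aleph0] using lift_mk_le'.2 ⟨⟨f, hf⟩⟩

end CantorScheme

section Perfect

variable {α : Type*} [TopologicalSpace α] [T25Space α] {C : Set α}

theorem Perfect.exists_cantorScheme (hC : Perfect C) (hne : C.Nonempty) :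
    ∃ A : List Bool → Set α, A [] = C ∧ (∀ l, Perfect (A l) ∧ (A l).Nonempty) ∧
      CantorScheme.Antitone A ∧ CantorScheme.Disjoint A := by
  choose! P₀ P₁ hP₀ hP₁ hdisj using fun (S : Set α) (hS : Perfect S) => hS.splitting
  let A : List Bool → Set α := fun l => l.rec C fun b _ S => cond b (P₁ S) (P₀ S)
  have hA : ∀ l, Perfect (A l) ∧ (A l).Nonempty := by
    intro l
    induction l with
    | nil => exact ⟨hC, hne⟩
    | cons b l ih =>
      cases b
      exacts [(hP₀ _ ih.1 ih.2).imp_right And.left, (hP₁ _ ih.1 ih.2).imp_right And.left]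
  refine ⟨A, rfl, hA, ?_, fun l => pairwise_disjoint_on_bool.2 (hdisj _ (hA l).1 (hA l).2).symm⟩
  rintro l (_ | _)
  exacts [(hP₀ _ (hA l).1 (hA l).2).2.2, (hP₁ _ (hA l).1 (hA l).2).2.2]

theorem Perfect.continuum_le_mk (hC : Perfect C) (hne : C.Nonempty) (hcomp : IsCompact C) :
    𝔠 ≤ #C := by
  obtain ⟨A, rfl, hA, hanti, hdisj⟩ := hC.exists_cantorScheme hne
  exact CantorScheme.continuum_le_mk_of_inducedMap_fst_eq_univ
    (CantorScheme.inducedMap_fst_eq_univ_of_isCompact hanti hcomp (fun l => (hA l).1.closed)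
      fun l => (hA l).2) hdisj

end Perfect

namespace MulAction

open Pointwise

variable {G X : Type*} [Group G] [MulAction G X] [TopologicalSpace X] [ContinuousConstSMul G X]
  {x : X}

theorem preperfect_orbit (hinf : (orbit G x).Infinite) (hcomp : IsCompact (orbit G x)) :
    Preperfect (orbit G x) := by
  obtain ⟨z, hz, hacc⟩ := hinf.exists_accPt_of_subset_isCompact hcomp subset_rfl
  intro y hy
  obtain ⟨g, rfl⟩ : ∃ g : G, g • z = y := by
    rw [← orbit_eq_iff.2 hz] at hy
    exact hy
  have := hacc.map (continuous_const_smul g).continuousAt (MulAction.injective g)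
  rwa [Filter.map_principal, image_smul, smul_orbit] at this

theorem orbit_finite_of_mk_lt_continuum [T25Space X] (hcomp : IsCompact (orbit G x))
    (hcard : #(orbit G x) < 𝔠) : (orbit G x).Finite := by
  by_contra hinf
  exact hcard.not_ge <| Perfect.continuum_le_mk ⟨hcomp.isClosed, preperfect_orbit hinf hcomp⟩
    ⟨x, mem_orbit_self x⟩ hcomp

end MulAction

theorem stmt1_general {G : Type*} [Group G] [TopologicalSpace G] [IsTopologicalGroup G]
    [CompactSpace G] [T2Space G] (x : G)
    (h : Cardinal.mk ↥{y : G | ∃ g : G, y = g⁻¹ * x * g} < Cardinal.continuum) :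
    {y : G | ∃ g : G, y = g⁻¹ * x * g}.Finite := by
  have horbit : {y : G | ∃ g : G, y = g⁻¹ * x * g} = MulAction.orbit (ConjAct G) x := by
    ext y
    simp only [mem_ofPred_eq, ConjAct.mem_orbit_conjAct, isConj_iff]
    exact ⟨fun ⟨g, hg⟩ => ⟨g, by rw [hg]; group⟩, fun ⟨c, hc⟩ => ⟨c, by rw [← hc]; group⟩⟩
  have hcomp : IsCompact {y : G | ∃ g : G, y = g⁻¹ * x * g} := by
    simpa [range, eq_comm] using isCompact_range (f := fun g : G => g⁻¹ * x * g) (by fun_prop)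
  rw [horbit] at h hcomp ⊢
  exact MulAction.orbit_finite_of_mk_lt_continuum hcomp h

/-- In a profinite group, a conjugacy class with fewer than `2^ℵ₀` elements is finite. -/
theorem stmt1 {G : Type*} [Group G] [TopologicalSpace G] [IsTopologicalGroup G]
    [CompactSpace G] [T2Space G] [TotallyDisconnectedSpace G] (x : G)
    (h : Cardinal.mk ↥{y : G | ∃ g : G, y = g⁻¹ * x * g} < Cardinal.continuum) :
    {y : G | ∃ g : G, y = g⁻¹ * x * g}.Finite :=
  stmt1_general x h
end

section
/- Let G be a profinite group and let x ∈ G. If the conjugacy class of x has fewer than 2^ℵ₀ elements, then the centralizer C_G(x) is an open subgroup of G. -/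
/-!
The conjugacy class `S` of `x` is compact, being the image of `G` under `g ↦ g⁻¹ x g`. A nonempty
compact perfect set in a T₂.₅ space (a Hausdorff group is regular) carries a Cantor scheme of
nested closed sets, so it has at least `2^ℵ₀` points; hence `S` has an isolated point `y`. If
`y = c x c⁻¹`, then near `1` the continuous map `h ↦ (c h) x (c h)⁻¹` into `S` must take the value
`y`, so every `h` near `1` centralizes `x`: the centralizer is a neighbourhood of `1`, hence open.
-/

open Cardinal Set Filter Topology

def binaryBranch {P : Type*} (split : P → Bool → P) (p₀ : P) (f : ℕ → Bool) : ℕ → P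
  | 0 => p₀
  | n + 1 => split (binaryBranch split p₀ f n) (f n)

section binaryBranch

variable {P : Type*} (split : P → Bool → P) (p₀ : P)

theorem binaryBranch_congr {f g : ℕ → Bool} {n : ℕ} (h : ∀ m < n, f m = g m) :
    binaryBranch split p₀ f n = binaryBranch split p₀ g n := by
  induction n with
  | zero => rfl
  | succ n ih =>
    simp only [binaryBranch, h n n.lt_succ_self, ih fun m hm => h m (hm.trans n.lt_succ_self)]

theorem exists_binaryBranch_eq_and_ne {f g : ℕ → Bool} (hfg : f ≠ g) :
    ∃ n, binaryBranch split p₀ f n = binaryBranch split p₀ g n ∧ f n ≠ g n := by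
  classical
  have hex : ∃ n, f n ≠ g n := Function.ne_iff.1 hfg
  refine ⟨Nat.find hex, binaryBranch_congr split p₀ fun m hm => ?_, Nat.find_spec hex⟩
  exact not_not.1 (Nat.find_min hex hm)

end binaryBranch

theorem Perfect.continuum_le_mk_of_isCompact {α : Type*} [TopologicalSpace α] [T25Space α]
    {C : Set α} (hC : Perfect C) (hne : C.Nonempty) (hcomp : IsCompact C) : 𝔠 ≤ #C := by
  let P := {s : Set α // Perfect s ∧ s.Nonempty}
  have hsplit : ∀ p : P, ∃ q : Bool → P,
      (∀ b, (q b).1 ⊆ p.1) ∧ ∀ b b', b ≠ b' → Disjoint (q b).1 (q b').1 := by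
    rintro ⟨s, hs, hsne⟩
    obtain ⟨C₀, C₁, ⟨h₀, h₀ne, h₀s⟩, ⟨h₁, h₁ne, h₁s⟩, hdisj⟩ := hs.splitting hsne
    refine ⟨fun b => cond b ⟨C₁, h₁, h₁ne⟩ ⟨C₀, h₀, h₀ne⟩, Bool.forall_bool.2 ⟨h₀s, h₁s⟩, ?_⟩
    rintro (_ | _) (_ | _) hb
    exacts [absurd rfl hb, hdisj, hdisj.symm, absurd rfl hb]
  choose split hsub hdisj using hsplit
  let K := binaryBranch split ⟨C, hC, hne⟩
  have hK : ∀ f, (⋂ n, (K f n).1).Nonempty := fun f =>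
    IsCompact.nonempty_iInter_of_sequence_nonempty_isCompact_isClosed _ (fun n => hsub _ _)
      (fun n => (K f n).2.2) hcomp fun n => (K f n).2.1.closed
  choose pt hpt using hK
  have pt_mem : ∀ f n, pt f ∈ (K f n).1 := fun f => mem_iInter.1 (hpt f)
  have hinj : Function.Injective fun f => (⟨pt f, pt_mem f 0⟩ : C) := by
    intro f g hfg
    by_contra hfg_ne
    obtain ⟨n, heq, hn⟩ := exists_binaryBranch_eq_and_ne split ⟨C, hC, hne⟩ hfg_ne
    have hg : pt g ∈ (split (K f n) (g n)).1 := by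
      rw [show K f n = K g n from heq]
      exact pt_mem g (n + 1)
    exact (hdisj _ _ _ hn).ne_of_mem (pt_mem f (n + 1)) hg (congrArg Subtype.val hfg)
  simpa [← two_power_aleph0] using lift_mk_le_lift_mk_of_injective hinj

theorem IsCompact.exists_isolated_of_mk_lt_continuum {α : Type*} [TopologicalSpace α]
    [T25Space α] {C : Set α} (hC : IsCompact C) (hne : C.Nonempty) (hlt : #C < 𝔠) :
    ∃ y ∈ C, ∃ U ∈ 𝓝 y, ∀ z ∈ U ∩ C, z = y := by
  by_contra! h
  exact hlt.not_ge <|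
    Perfect.continuum_le_mk_of_isCompact ⟨hC.isClosed, preperfect_iff_nhds.2 h⟩ hne hC

theorem Subgroup.isOpen_centralizer_singleton_of_isolated {G : Type*} [Group G]
    [TopologicalSpace G] [IsTopologicalGroup G] {x y : G} (hxy : IsConj x y) {U : Set G}
    (hU : U ∈ 𝓝 y) (hUy : ∀ z ∈ U, IsConj x z → z = y) :
    IsOpen (centralizer {x} : Set G) := by
  obtain ⟨c, rfl⟩ := isConj_iff.1 hxy
  have hcont : Continuous fun h : G => (c * h) * x * (c * h)⁻¹ := by fun_prop
  refine isOpen_of_mem_nhds _ (g := 1) <| mem_of_superset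
    (hcont.continuousAt.preimage_mem_nhds (by simpa using hU)) fun h hh => ?_
  have hconj : c * h * x * (c * h)⁻¹ = c * x * c⁻¹ := hUy _ hh (isConj_iff.2 ⟨c * h, rfl⟩)
  rw [SetLike.mem_coe, mem_centralizer_singleton_iff]
  refine mul_inv_eq_iff_eq_mul.1 ?_
  simpa [mul_assoc] using congrArg (fun z => c⁻¹ * z * c) hconj

theorem isCompact_conjugatesOf {G : Type*} [Group G] [TopologicalSpace G] [IsTopologicalGroup G]
    [CompactSpace G] (x : G) : IsCompact (conjugatesOf x) := by
  have : conjugatesOf x = range fun c : G => c * x * c⁻¹ := by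
    ext; simp [conjugatesOf, isConj_iff]
  rw [this]
  exact isCompact_range (by fun_prop)

theorem stmt2_general {G : Type*} [Group G] [TopologicalSpace G] [IsTopologicalGroup G]
    [CompactSpace G] [T2Space G] (x : G)
    (h : Cardinal.mk ↥{y : G | ∃ g : G, y = g⁻¹ * x * g} < Cardinal.continuum) :
    IsOpen ((Subgroup.centralizer {x} : Subgroup G) : Set G) := by
  have hS : {y : G | ∃ g : G, y = g⁻¹ * x * g} = conjugatesOf x := by
    ext y
    exact ⟨fun ⟨g, hg⟩ => isConj_iff.2 ⟨g⁻¹, by simp [hg, mul_assoc]⟩,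
      fun hxy => let ⟨c, hc⟩ := isConj_iff.1 hxy; ⟨c⁻¹, by simp [← hc, mul_assoc]⟩⟩
  rw [hS] at h
  obtain ⟨y, hy, U, hU, hUy⟩ :=
    (isCompact_conjugatesOf x).exists_isolated_of_mk_lt_continuum ⟨x, mem_conjugatesOf_self⟩ h
  exact Subgroup.isOpen_centralizer_singleton_of_isolated hy hU fun z hz hxz => hUy z ⟨hz, hxz⟩

/-- In a profinite group, if the conjugacy class of `x` has fewer than `2^ℵ₀` elements,
then the centralizer of `x` is open. -/
theorem stmt2 {G : Type*} [Group G] [TopologicalSpace G] [IsTopologicalGroup G]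
    [CompactSpace G] [T2Space G] [TotallyDisconnectedSpace G] (x : G)
    (h : Cardinal.mk ↥{y : G | ∃ g : G, y = g⁻¹ * x * g} < Cardinal.continuum) :
    IsOpen ((Subgroup.centralizer {x} : Subgroup G) : Set G) :=
  stmt2_general x h
end

section
/- Let G be a profinite group such that for some positive integer m the set {g^m : g ∈ G} of m-th powers has cardinality less than 2^ℵ₀. Then every element of G has finite order, i.e. G is periodic (torsion). -/
/-!
If `g` has infinite order then so does `g ^ m`, and the closure `K` of the cyclic group
generated by `g ^ m` is an infinite compact Hausdorff group. Since `K` is homogeneous and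
infinite, no point of `K` is isolated, so a Cantor scheme of nested nonempty perfect sets embeds
`ℕ → Bool` into `K`, giving `𝔠 ≤ #K`. But `K` lies in the closed set of `m`-th powers, which has
fewer than `𝔠` elements.
-/

open Cardinal Set

section CantorScheme

variable {X : Type*}

def cantorBranch (p : Set X → Bool → Set X) (f : ℕ → Bool) : ℕ → Set X
  | 0 => univ
  | n + 1 => p (cantorBranch p f n) (f n)

theorem cantorBranch_congr {p : Set X → Bool → Set X} {f g : ℕ → Bool} {n : ℕ}
    (hfg : ∀ k < n, f k = g k) : cantorBranch p f n = cantorBranch p g n := by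
  induction n with
  | zero => rfl
  | succ n ih =>
    simp only [cantorBranch, hfg n n.lt_succ_self, ih fun k hk => hfg k (hk.trans n.lt_succ_self)]

variable [TopologicalSpace X]

structure IsPerfectSplitting (p : Set X → Bool → Set X) : Prop where
  perfect : ∀ V, Perfect V → V.Nonempty → ∀ b, Perfect (p V b)
  nonempty : ∀ V, Perfect V → V.Nonempty → ∀ b, (p V b).Nonempty
  subset : ∀ V, Perfect V → V.Nonempty → ∀ b, p V b ⊆ V
  disjoint : ∀ V, Perfect V → V.Nonempty → Disjoint (p V false) (p V true)

theorem exists_isPerfectSplitting [T25Space X] :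
    ∃ p : Set X → Bool → Set X, IsPerfectSplitting p := by
  have hsplit : ∀ V : Set X, ∃ p : Bool → Set X, Perfect V → V.Nonempty →
      (∀ b, Perfect (p b) ∧ (p b).Nonempty ∧ p b ⊆ V) ∧ Disjoint (p false) (p true) := by
    intro V
    by_cases hV : Perfect V ∧ V.Nonempty
    · obtain ⟨C₀, C₁, h₀, h₁, hd⟩ := hV.1.splitting hV.2
      refine ⟨fun b => if b then C₁ else C₀, fun _ _ => ⟨?_, by simpa⟩⟩
      rintro (_ | _) <;> simpa
    · exact ⟨fun _ => ∅, fun hp hne => absurd ⟨hp, hne⟩ hV⟩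
  choose p hp using hsplit
  exact ⟨p, fun V hV hne b => ((hp V hV hne).1 b).1, fun V hV hne b => ((hp V hV hne).1 b).2.1,
    fun V hV hne b => ((hp V hV hne).1 b).2.2, fun V hV hne => (hp V hV hne).2⟩

variable {p : Set X → Bool → Set X} [PerfectSpace X] [Nonempty X]

theorem IsPerfectSplitting.perfect_cantorBranch (hp : IsPerfectSplitting p) (f : ℕ → Bool)
    (n : ℕ) : Perfect (cantorBranch p f n) ∧ (cantorBranch p f n).Nonempty := by
  induction n with
  | zero => exact ⟨PerfectSpace.univ_perfect X, univ_nonempty⟩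
  | succ n ih => exact ⟨hp.perfect _ ih.1 ih.2 _, hp.nonempty _ ih.1 ih.2 _⟩

theorem IsPerfectSplitting.cantorBranch_succ_subset (hp : IsPerfectSplitting p) (f : ℕ → Bool)
    (n : ℕ) : cantorBranch p f (n + 1) ⊆ cantorBranch p f n :=
  hp.subset _ (hp.perfect_cantorBranch f n).1 (hp.perfect_cantorBranch f n).2 _

theorem IsPerfectSplitting.iInter_cantorBranch_nonempty [CompactSpace X]
    (hp : IsPerfectSplitting p) (f : ℕ → Bool) :
    (⋂ n, cantorBranch p f n).Nonempty :=
  IsCompact.nonempty_iInter_of_sequence_nonempty_isCompact_isClosed _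
    (hp.cantorBranch_succ_subset f) (fun n => (hp.perfect_cantorBranch f n).2)
    isCompact_univ (fun n => (hp.perfect_cantorBranch f n).1.closed)

theorem IsPerfectSplitting.disjoint_cantorBranch (hp : IsPerfectSplitting p) {f g : ℕ → Bool}
    {n : ℕ} (hfg : ∀ k < n, f k = g k) (hn : f n ≠ g n) :
    Disjoint (cantorBranch p f (n + 1)) (cantorBranch p g (n + 1)) := by
  simp only [cantorBranch, cantorBranch_congr hfg]
  obtain ⟨hV, hne⟩ := hp.perfect_cantorBranch g n
  cases hf : f n <;> cases hg : g n <;> simp only [hf, hg, ne_eq, not_true_eq_false] at hn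
  · exact hp.disjoint _ hV hne
  · exact (hp.disjoint _ hV hne).symm

end CantorScheme

theorem continuum_le_mk_of_perfectSpace {X : Type*} [TopologicalSpace X] [T2Space X]
    [CompactSpace X] [PerfectSpace X] [Nonempty X] : 𝔠 ≤ #X := by
  obtain ⟨p, hp⟩ := exists_isPerfectSplitting (X := X)
  choose x hx using hp.iInter_cantorBranch_nonempty
  have hx_inj : Function.Injective x := by
    intro f g hfg
    by_contra hne
    classical
    have hex : ∃ n, f n ≠ g n := Function.ne_iff.1 hne
    have hbelow : ∀ k < Nat.find hex, f k = g k := fun k hk => not_not.1 (Nat.find_min hex hk)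
    refine (hp.disjoint_cantorBranch hbelow (Nat.find_spec hex)).ne_of_mem ?_ ?_ hfg
    · exact mem_iInter.1 (hx f) _
    · exact mem_iInter.1 (hx g) _
  simpa using lift_mk_le_lift_mk_of_injective hx_inj

theorem perfectSpace_of_compactSpace_of_infinite {G : Type*} [Group G] [TopologicalSpace G]
    [SeparatelyContinuousMul G] [CompactSpace G] [Infinite G] : PerfectSpace G := by
  rw [perfectSpace_iff_forall_not_isolated]
  intro x
  by_contra hx
  rw [Filter.not_neBot, ← isOpen_singleton_iff_punctured_nhds] at hx
  have : DiscreteTopology G :=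
    discreteTopology_of_isOpen_singleton_one (by simpa using hx.preimage (continuous_const_mul x))
  have : Finite G := finite_of_compact_of_discrete
  exact not_finite G

theorem topologicalClosure_zpowers_pow_subset_range_pow {G : Type*} [Group G]
    [TopologicalSpace G] [IsTopologicalGroup G] [CompactSpace G] [T2Space G] (g : G) (m : ℕ) :
    ((Subgroup.zpowers (g ^ m)).topologicalClosure : Set G) ⊆ range (· ^ m) := by
  refine closure_minimal ?_ (isCompact_range (continuous_pow m)).isClosed
  rintro _ ⟨k, rfl⟩
  exact ⟨g ^ k, by simp only [← zpow_natCast, ← zpow_mul, mul_comm]⟩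

theorem continuum_le_mk_topologicalClosure_zpowers {G : Type*} [Group G] [TopologicalSpace G]
    [IsTopologicalGroup G] [CompactSpace G] [T2Space G] {g : G} (hg : ¬IsOfFinOrder g) :
    𝔠 ≤ #(Subgroup.zpowers g).topologicalClosure := by
  have : CompactSpace (Subgroup.zpowers g).topologicalClosure :=
    isCompact_iff_compactSpace.1 (Subgroup.isClosed_topologicalClosure _).isCompact
  have : Infinite (Subgroup.zpowers g).topologicalClosure :=
    ((infinite_zpowers.2 hg).mono (Subgroup.le_topologicalClosure _)).to_subtype
  have := perfectSpace_of_compactSpace_of_infinite (G := (Subgroup.zpowers g).topologicalClosure)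
  exact continuum_le_mk_of_perfectSpace

theorem stmt4_general {G : Type*} [Group G] [TopologicalSpace G] [IsTopologicalGroup G]
    [CompactSpace G] [T2Space G] (m : ℕ) (hm : 0 < m)
    (h : Cardinal.mk ↥{x : G | ∃ g : G, g ^ m = x} < Cardinal.continuum) :
    ∀ g : G, IsOfFinOrder g := by
  intro g
  by_contra hg
  have hgm : ¬IsOfFinOrder (g ^ m) := fun hgm => hg (hgm.of_pow hm.ne')
  exact h.not_ge ((continuum_le_mk_topologicalClosure_zpowers hgm).trans
    (mk_le_mk_of_subset (topologicalClosure_zpowers_pow_subset_range_pow g m)))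

/-- If, for some positive integer `m`, a profinite group has fewer than `2^ℵ₀`
`m`-th powers, then the group is periodic (torsion). -/
theorem stmt4 {G : Type*} [Group G] [TopologicalSpace G] [IsTopologicalGroup G]
    [CompactSpace G] [T2Space G] [TotallyDisconnectedSpace G] (m : ℕ) (hm : 0 < m)
    (h : Cardinal.mk ↥{x : G | ∃ g : G, g ^ m = x} < Cardinal.continuum) :
    ∀ g : G, IsOfFinOrder g :=
  stmt4_general m hm h
end

section
/- Let G be a profinite group and let N be a closed normal subgroup of G that is topologically generated by finitely many elements g₁, …, g_r, each of which has an open centralizer in G. Then the quotient G / C_G(N) is finite, and consequently (by Schur's theorem) the commutator subgroup [N, N] of N is finite. -/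
/-!
Since `N` is the closure of the subgroup generated by the `gᵢ`, and centralizers are closed in a
Hausdorff group, `C_G(N) = ⋂ᵢ C_G(gᵢ)`, a finite intersection of open subgroups. An open subgroup
of a compact group has finite index. Then `C_N(N) = N ∩ C_G(N)` has finite index in `N`, so
commutators in `N` depend only on cosets of the centre and are finitely many, and Schur's theorem
makes `[N, N]` finite.
-/

open Subgroup
open scoped commutatorElement

section Schur

variable {H : Type*} [Group H]

theorem commutatorElement_mul_mem_center {a b z w : H} (hz : z ∈ center H) (hw : w ∈ center H) :
    ⁅a * z, b * w⁆ = ⁅a, b⁆ := by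
  rw [mem_center_iff] at hz hw
  calc ⁅a * z, b * w⁆ = a * (z * (b * w) * z⁻¹) * a⁻¹ * (b * w)⁻¹ := by
        rw [commutatorElement_def]; group
    _ = a * b * (w * a⁻¹ * w⁻¹) * b⁻¹ := by rw [← hz (b * w)]; group
    _ = ⁅a, b⁆ := by rw [← hw a⁻¹, commutatorElement_def]; group

theorem finite_commutatorSet_of_finiteIndex_center [(center H).FiniteIndex] :
    Finite (commutatorSet H) := by
  have : Finite (H ⧸ center H) := finite_quotient_of_finiteIndex
  refine (Set.finite_range fun p : (H ⧸ center H) × (H ⧸ center H) ↦ ⁅p.1.out, p.2.out⁆).subset ?_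
  rintro _ ⟨a, b, rfl⟩
  obtain ⟨⟨z, hz⟩, ha⟩ := QuotientGroup.mk_out_eq_mul (center H) a
  obtain ⟨⟨w, hw⟩, hb⟩ := QuotientGroup.mk_out_eq_mul (center H) b
  exact ⟨(a, b), by simp only [ha, hb]; exact commutatorElement_mul_mem_center hz hw⟩

theorem Subgroup.finite_commutator_of_finiteIndex_centralizer {G : Type*} [Group G]
    (N : Subgroup G) [(centralizer (N : Set G)).FiniteIndex] : Finite ↥⁅N, N⁆ := by
  have : (center N).FiniteIndex := finiteIndex_of_le fun n hn ↦
    mem_center_iff.mpr fun m ↦ Subtype.ext (mem_centralizer_iff.mp (mem_subgroupOf.mp hn) m.1 m.2)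
  -- Schur's theorem, a Mathlib instance, turns this into finiteness of `commutator N`.
  have := finite_commutatorSet_of_finiteIndex_center (H := N)
  rw [← N.map_subtype_commutator]
  exact Finite.of_equiv _ (equivMapOfInjective _ _ N.subtype_injective).toEquiv

end Schur

theorem Set.centralizer_closure {M : Type*} [Mul M] [TopologicalSpace M]
    [SeparatelyContinuousMul M] [T2Space M] (s : Set M) :
    centralizer (closure s) = centralizer s := by
  refine (centralizer_subset _root_.subset_closure).antisymm ?_
  rw [← centralizer_centralizer_centralizer s]
  exact centralizer_subset
    (closure_minimal subset_centralizer_centralizer (isClosed_centralizer _))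

theorem Subgroup.isOpen_centralizer_of_topologicalClosure_eq {G : Type*} [Group G]
    [TopologicalSpace G] [IsTopologicalGroup G] [T2Space G] {ι : Type*} [Finite ι]
    {N : Subgroup G} {g : ι → G} (hgen : (closure (Set.range g)).topologicalClosure = N)
    (hcent : ∀ i, IsOpen ((centralizer {g i} : Subgroup G) : Set G)) :
    IsOpen ((centralizer (N : Set G) : Subgroup G) : Set G) := by
  have : centralizer (N : Set G) = ⨅ i, centralizer {g i} := by
    rw [← iInf_range (g := fun x ↦ centralizer {x}), ← centralizer_eq_iInf,
      ← centralizer_closure (Set.range g), ← hgen]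
    exact SetLike.coe_injective (Set.centralizer_closure _)
  rw [this, coe_iInf]
  exact isOpen_iInter_of_finite hcent

theorem stmt5_general {G : Type*} [Group G] [TopologicalSpace G] [IsTopologicalGroup G]
    [CompactSpace G] [T2Space G]
    (N : Subgroup G)
    (r : ℕ) (g : Fin r → G)
    (hgen : (Subgroup.closure (Set.range g)).topologicalClosure = N)
    (hcent : ∀ i, IsOpen ((Subgroup.centralizer {g i} : Subgroup G) : Set G)) :
    (Subgroup.centralizer (N : Set G)).FiniteIndex ∧ Finite ↥⁅N, N⁆ := by
  have : Finite (G ⧸ centralizer (N : Set G)) :=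
    quotient_finite_of_isOpen _ (isOpen_centralizer_of_topologicalClosure_eq hgen hcent)
  have : (centralizer (N : Set G)).FiniteIndex := finiteIndex_of_finite_quotient
  exact ⟨this, N.finite_commutator_of_finiteIndex_centralizer⟩

/-- If a closed normal subgroup `N` of a profinite group `G` is topologically generated
by finitely many elements, each with open centralizer, then `C_G(N)` has finite index
in `G`, and consequently the commutator subgroup `[N,N]` is finite (Schur). -/
theorem stmt5 {G : Type*} [Group G] [TopologicalSpace G] [IsTopologicalGroup G]
    [CompactSpace G] [T2Space G] [TotallyDisconnectedSpace G]
    (N : Subgroup G) [N.Normal] (hNc : IsClosed (N : Set G))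
    (r : ℕ) (g : Fin r → G) (hgN : ∀ i, g i ∈ N)
    (hgen : (Subgroup.closure (Set.range g)).topologicalClosure = N)
    (hcent : ∀ i, IsOpen ((Subgroup.centralizer {g i} : Subgroup G) : Set G)) :
    (Subgroup.centralizer (N : Set G)).FiniteIndex ∧ Finite ↥⁅N, N⁆ :=
  stmt5_general N r g hgen hcent
end

section
/- Let G be a profinite group that is the direct product of its Sylow pro-p subgroups H_p (e.g. G pronilpotent), and let w be a group word. If the set of w-values in G has cardinality less than 2^ℵ₀, then w(H_p) = 1 for all but finitely many primes p. -/
/-!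
The word map of a product acts coordinatewise, so the `w`-values of `∏ p, H p` are exactly the
product of the sets of `w`-values of the factors. If infinitely many factors had a nontrivial
`w`-value `a p`, choosing `a p` or `1` independently in each of these coordinates would give
`2 ^ ℵ₀` distinct `w`-values.
-/

universe u v

open Cardinal Set

theorem FreeGroup.lift_pi_apply {α ι : Type*} {G : ι → Type*} [∀ i, Group (G i)]
    (f : α → ∀ i, G i) (w : FreeGroup α) (i : ι) :
    lift f w i = lift (fun a => f a i) w := by
  have : (Pi.evalMonoidHom G i).comp (lift f) = lift fun a => f a i :=
    FreeGroup.ext_hom _ _ fun a => by simp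
  exact DFunLike.congr_fun this w

theorem FreeGroup.lift_const_one {α G : Type*} [Group G] (w : FreeGroup α) :
    lift (fun _ => (1 : G)) w = 1 := by
  rw [show lift (fun _ : α => (1 : G)) = 1 from FreeGroup.ext_hom _ _ fun _ => by simp]
  rfl

def wordValues {α : Type*} (G : Type*) [Group G] (w : FreeGroup α) : Set G :=
  range fun f : α → G => FreeGroup.lift f w

theorem one_mem_wordValues {α G : Type*} [Group G] (w : FreeGroup α) : (1 : G) ∈ wordValues G w :=
  ⟨fun _ => 1, FreeGroup.lift_const_one w⟩

theorem wordValues_pi {α ι : Type*} {G : ι → Type*} [∀ i, Group (G i)] (w : FreeGroup α) :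
    wordValues (∀ i, G i) w = univ.pi fun i => wordValues (G i) w := by
  ext x
  simp only [wordValues, mem_range, mem_pi, mem_univ, true_implies]
  constructor
  · rintro ⟨f, rfl⟩ i
    exact ⟨fun a => f a i, (FreeGroup.lift_pi_apply f w i).symm⟩
  · intro hx
    choose f hf using hx
    exact ⟨fun a i => f i a, funext fun i => by rw [FreeGroup.lift_pi_apply, hf]⟩

open Classical in
theorem continuum_le_mk_pi_of_infinite_ne_one {ι : Type u} {G : ι → Type v} [∀ i, One (G i)]
    (V : ∀ i, Set (G i)) (h1 : ∀ i, 1 ∈ V i) (hinf : {i | ∃ x ∈ V i, x ≠ 1}.Infinite) :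
    𝔠 ≤ #(univ.pi V) := by
  set S := {i | ∃ x ∈ V i, x ≠ 1}
  choose a haV ha1 using fun s : S => s.2
  let ind (T : Set S) : univ.pi V :=
    ⟨fun i => if h : ∃ hi : i ∈ S, ⟨i, hi⟩ ∈ T then a ⟨i, h.1⟩ else 1,
      fun i _ => by dsimp only; split_ifs <;> simp_all⟩
  have ind_ne_one (T : Set S) (s : S) : (ind T : ∀ i, G i) s ≠ 1 ↔ s ∈ T := by
    by_cases hs : s ∈ T <;> simp [ind, hs, ha1]
  have hind : Function.Injective ind := fun T T' h => Set.ext fun s => by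
    rw [← ind_ne_one, ← ind_ne_one, h]
  calc 𝔠 = lift.{max u v} (2 ^ ℵ₀ : Cardinal.{u}) := by rw [two_power_aleph0, lift_continuum]
    _ ≤ lift.{max u v} #(Set S) := by
      rw [mk_set]
      exact lift_le.2 (power_le_power_left two_ne_zero (aleph0_le_mk_iff.2 hinf.to_subtype))
    _ ≤ lift.{u} #(univ.pi V) := lift_mk_le_lift_mk_of_injective hind
    _ = #(univ.pi V) := lift_id'.{u} _

theorem stmt9_general (H : Nat.Primes → Type*) [∀ p, Group (H p)]
    (r : ℕ) (w : FreeGroup (Fin r))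
    (hcard : Cardinal.mk
      ↥{x : (p : Nat.Primes) → H p |
        ∃ f : Fin r → ((p : Nat.Primes) → H p), FreeGroup.lift f w = x}
      < Cardinal.continuum) :
    {p : Nat.Primes | ∃ f : Fin r → H p, FreeGroup.lift f w ≠ 1}.Finite := by
  by_contra hinf
  have hnontrivial : {p | ∃ x ∈ wordValues (H p) w, x ≠ 1}.Infinite := by
    simpa [wordValues] using hinf
  have hvalues :=
    continuum_le_mk_pi_of_infinite_ne_one _ (fun p => one_mem_wordValues w) hnontrivial
  rw [← wordValues_pi] at hvalues
  exact hcard.not_ge hvalues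

/-- Let `G = ∏_p H_p` be the direct product, over all primes `p`, of profinite pro-`p`
groups `H_p`.  If the set of `w`-values of `G` has cardinality less than `2^ℵ₀`, then
`w(H_p) = 1` (i.e. all `w`-values of `H_p` are trivial) for all but finitely many `p`. -/
theorem stmt9 (H : Nat.Primes → Type*) [∀ p, Group (H p)] [∀ p, TopologicalSpace (H p)]
    [∀ p, IsTopologicalGroup (H p)] [∀ p, CompactSpace (H p)] [∀ p, T2Space (H p)]
    [∀ p, TotallyDisconnectedSpace (H p)]
    (hpro : ∀ (p : Nat.Primes) (U : Subgroup (H p)) [U.Normal],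
      IsOpen (U : Set (H p)) → IsPGroup (p : ℕ) (H p ⧸ U))
    (r : ℕ) (w : FreeGroup (Fin r))
    (hcard : Cardinal.mk
      ↥{x : (p : Nat.Primes) → H p |
        ∃ f : Fin r → ((p : Nat.Primes) → H p), FreeGroup.lift f w = x}
      < Cardinal.continuum) :
    {p : Nat.Primes | ∃ f : Fin r → H p, FreeGroup.lift f w ≠ 1}.Finite :=
  stmt9_general H r w hcard
end

section
/- Let w be a word such that for every finite group H, the set of w-values H_w is closed under taking e-th powers whenever gcd(e,|H|)=1 (that is, w is weakly rational). Let G be a profinite group with |G_w| < 2^ℵ₀, and let h ∈ G_w. Then every topological generator g of the procyclic group H = closure of ⟨h⟩ also lies in G_w. -/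
private lemma lift_map' {r : ℕ} {Q K : Type*} [Group Q] [Group K] (ψ : Q →* K)
    (f : Fin r → Q) (w : FreeGroup (Fin r)) :
    ψ (FreeGroup.lift f w) = FreeGroup.lift (ψ ∘ f) w := by
  have : ψ.comp (FreeGroup.lift f) = FreeGroup.lift (ψ ∘ f) := by
    ext i
    simp
  exact DFunLike.congr_fun this w

private lemma cont_lift' {r : ℕ} {G : Type*} [Group G] [TopologicalSpace G]
    [IsTopologicalGroup G] (w : FreeGroup (Fin r)) :
    Continuous fun f : Fin r → G => FreeGroup.lift f w := by
  induction w using FreeGroup.induction_on with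
  | C1 => simpa using continuous_const
  | of i =>
    have : (fun f : Fin r → G => FreeGroup.lift f (FreeGroup.of i)) = fun f => f i := by
      funext f; exact FreeGroup.lift_apply_of
    rw [this]; exact continuous_apply i
  | inv_of i _ =>
    have : (fun f : Fin r → G => FreeGroup.lift f (FreeGroup.of i)⁻¹) = fun f => (f i)⁻¹ := by
      funext f; rw [map_inv]; exact congrArg _ FreeGroup.lift_apply_of
    rw [this]; exact (continuous_apply i).inv
  | mul x y hx hy => simp only [map_mul]; exact hx.mul hy

private lemma generator_pow' {Q : Type*} [Group Q] [Finite Q] {a b : Q}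
    (hab : Subgroup.zpowers a = Subgroup.zpowers b) :
    ∃ e : ℕ, Nat.Coprime e (Nat.card Q) ∧ a ^ e = b := by
  have hb : b ∈ Subgroup.zpowers a := hab ▸ Subgroup.mem_zpowers b
  obtain ⟨k, hk⟩ := Submonoid.mem_powers_iff b a |>.mp
    (mem_powers_iff_mem_zpowers.mpr hb)
  have hdpos : 0 < orderOf a := (isOfFinOrder_of_finite a).orderOf_pos
  have horder : orderOf b = orderOf a := by
    rw [← Nat.card_zpowers, ← Nat.card_zpowers, hab]
  have hgcd : Nat.gcd (orderOf a) k = 1 := by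
    have := orderOf_pow (n := k) a
    rw [hk, horder] at this
    rcases (Nat.div_eq_self.mp this.symm) with h0 | h1
    · omega
    · exact h1
  have hcop : Nat.Coprime k (orderOf a) := Nat.coprime_comm.mp hgcd
  haveI : Nonempty Q := ⟨a⟩
  haveI : NeZero (Nat.card Q) := ⟨Nat.card_pos.ne'⟩
  have hdvd : orderOf a ∣ Nat.card Q := orderOf_dvd_natCard a
  obtain ⟨v, hv⟩ := ZMod.unitsMap_surjective hdvd (ZMod.unitOfCoprime k hcop)
  refine ⟨(v : ZMod (Nat.card Q)).val, ZMod.val_coe_unit_coprime v, ?_⟩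
  rw [← hk]
  rw [pow_eq_pow_iff_modEq]
  rw [← ZMod.natCast_eq_natCast_iff]
  have h1 : ((v : ZMod (Nat.card Q)).val : ZMod (orderOf a))
      = ZMod.castHom hdvd (ZMod (orderOf a)) (v : ZMod (Nat.card Q)) := by
    rw [ZMod.natCast_val, ZMod.castHom_apply]
  have h2 : ZMod.castHom hdvd (ZMod (orderOf a)) (v : ZMod (Nat.card Q))
      = ((ZMod.unitOfCoprime k hcop : ZMod (orderOf a))) := by
    have := congrArg Units.val hv
    simpa [ZMod.unitsMap] using this
  rw [h1, h2, ZMod.coe_unitOfCoprime]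

private def MyCarrier (n : ℕ) : Type := Fin n

private lemma hwr_transfer {r : ℕ} (w : FreeGroup (Fin r))
    (hwr : ∀ (H : Type) [Group H] [Finite H] (e : ℕ), Nat.Coprime e (Nat.card H) →
      ∀ x : H, (∃ f : Fin r → H, FreeGroup.lift f w = x) →
        ∃ f : Fin r → H, FreeGroup.lift f w = x ^ e) :
    ∀ (Q : Type*) [Group Q] [Finite Q] (e : ℕ), Nat.Coprime e (Nat.card Q) →
      ∀ x : Q, (∃ f : Fin r → Q, FreeGroup.lift f w = x) →
        ∃ f : Fin r → Q, FreeGroup.lift f w = x ^ e := by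
  intro Q _ _ e he x hx
  obtain ⟨n, ⟨φ₀⟩⟩ := Finite.exists_equiv_fin Q
  let φ : MyCarrier n ≃ Q := (φ₀ : Q ≃ MyCarrier n).symm
  letI : Group (MyCarrier n) := Equiv.group φ
  haveI : Finite (MyCarrier n) := Finite.of_equiv Q φ.symm
  let ψ : MyCarrier n ≃* Q := Equiv.mulEquiv φ
  have hcard : Nat.card (MyCarrier n) = Nat.card Q := Nat.card_congr φ
  obtain ⟨f, hf⟩ := hx
  have hx' : ∃ f : Fin r → MyCarrier n, FreeGroup.lift f w = ψ.symm x :=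
    ⟨ψ.symm ∘ f, by
      have hlm := lift_map' ψ.symm.toMonoidHom f w
      simp only [MulEquiv.coe_toMonoidHom] at hlm
      rw [← hlm]; exact congrArg ψ.symm hf⟩
  obtain ⟨f', hf'⟩ := hwr (MyCarrier n) e (hcard ▸ he) (ψ.symm x) hx'
  refine ⟨ψ ∘ f', ?_⟩
  have hlm := lift_map' ψ.toMonoidHom f' w
  simp only [MulEquiv.coe_toMonoidHom] at hlm
  rw [← hlm, hf']
  simp

/-- Let `w` be a weakly rational word: for every finite group `H` and every `e`
coprime to `|H|`, the set of `w`-values of `H` is closed under `e`-th powers.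
Let `G` be a profinite group with fewer than `2^ℵ₀` `w`-values and let `h` be a
`w`-value of `G`.  Then every topological generator `g` of the procyclic group
`H = closure ⟨h⟩` is again a `w`-value of `G`. -/
theorem stmt11 (r : ℕ) (w : FreeGroup (Fin r))
    (hwr : ∀ (H : Type) [Group H] [Finite H] (e : ℕ), Nat.Coprime e (Nat.card H) →
      ∀ x : H, (∃ f : Fin r → H, FreeGroup.lift f w = x) →
        ∃ f : Fin r → H, FreeGroup.lift f w = x ^ e)
    {G : Type*} [Group G] [TopologicalSpace G] [IsTopologicalGroup G]
    [CompactSpace G] [T2Space G] [TotallyDisconnectedSpace G]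
    (hcard : Cardinal.mk ↥{x : G | ∃ f : Fin r → G, FreeGroup.lift f w = x}
      < Cardinal.continuum)
    (h : G) (hh : ∃ f : Fin r → G, FreeGroup.lift f w = h)
    (g : G)
    (hgen : (Subgroup.closure {g}).topologicalClosure
      = (Subgroup.closure {h}).topologicalClosure) :
    ∃ f : Fin r → G, FreeGroup.lift f w = g := by
  classical
  set S : Set G := {x : G | ∃ f : Fin r → G, FreeGroup.lift f w = x} with hS
  have hSrange : S = Set.range (fun f : Fin r → G => FreeGroup.lift f w) := by
    ext x; simp [hS, Set.mem_setOf_eq, Set.mem_range]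
  have hSclosed : IsClosed S := by
    rw [hSrange]
    exact (isCompact_range (cont_lift' w)).isClosed
  suffices hg : g ∈ closure S by
    rw [hSclosed.closure_eq] at hg
    exact hg
  rw [mem_closure_iff]
  intro U hUopen hgU
  -- find an open normal subgroup N with g • N ⊆ U
  have hVopen : IsOpen ((fun x => g * x) ⁻¹' U) :=
    hUopen.preimage (continuous_mul_left g)
  have h1V : (1 : G) ∈ (fun x => g * x) ⁻¹' U := by simpa using hgU
  obtain ⟨W, hWclopen, hW1, hWsub⟩ :=
    compact_exists_isClopen_in_isOpen hVopen h1V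
  obtain ⟨N, hN⟩ :=
    IsTopologicalGroup.exist_openNormalSubgroup_sub_clopen_nhds_of_one hWclopen hW1
  haveI : Finite (G ⧸ N.toSubgroup) :=
    Subgroup.quotient_finite_of_isOpen N.toSubgroup N.isOpen
  haveI : DiscreteTopology (G ⧸ N.toSubgroup) :=
    QuotientGroup.discreteTopology N.isOpen
  let π : G →* G ⧸ N.toSubgroup := QuotientGroup.mk' N.toSubgroup
  have hπcont : Continuous π := continuous_quotient_mk'
  -- image of topological closure equals image of the subgroup
  have keymap : ∀ x : G,
      Subgroup.map π ((Subgroup.closure {x}).topologicalClosure)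
        = Subgroup.closure {π x} := by
    intro x
    have h1 : Subgroup.map π (Subgroup.closure {x}) = Subgroup.closure {π x} := by
      rw [MonoidHom.map_closure, Set.image_singleton]
    refine le_antisymm ?_ ?_
    · intro q hq
      obtain ⟨y, hy, rfl⟩ := hq
      have hy' : y ∈ closure (↑(Subgroup.closure ({x} : Set G)) : Set G) := hy
      have : π y ∈ closure (π '' ↑(Subgroup.closure ({x} : Set G))) :=
        image_closure_subset_closure_image hπcont ⟨y, hy', rfl⟩
      rw [IsClosed.closure_eq (isClosed_discrete _)] at this
      rw [← h1]
      exact this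
    · rw [← h1]
      exact Subgroup.map_mono (Subgroup.le_topologicalClosure _)
  have hmapgh : Subgroup.closure {π g} = Subgroup.closure {π h} := by
    rw [← keymap g, ← keymap h, hgen]
  have hz : Subgroup.zpowers (π h) = Subgroup.zpowers (π g) := by
    rw [Subgroup.zpowers_eq_closure, Subgroup.zpowers_eq_closure, hmapgh]
  obtain ⟨e, he, heq⟩ := generator_pow' hz
  obtain ⟨f, hf⟩ := hh
  obtain ⟨f', hf'⟩ := hwr_transfer w hwr (G ⧸ N.toSubgroup) e he (π h)
    ⟨π ∘ f, by rw [← lift_map' π f w]; exact congrArg π hf⟩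
  choose F hF using fun i => QuotientGroup.mk'_surjective N.toSubgroup (f' i)
  refine ⟨FreeGroup.lift F w, ?_, ⟨F, rfl⟩⟩
  have hπeq : π (FreeGroup.lift F w) = π g := by
    rw [lift_map' π F w]
    have : π ∘ F = f' := funext hF
    rw [this, hf', heq]
  have hker : g⁻¹ * FreeGroup.lift F w ∈ N.toSubgroup := by
    rw [← QuotientGroup.eq]
    exact hπeq.symm
  have : FreeGroup.lift F w = g * (g⁻¹ * FreeGroup.lift F w) := by group
  rw [this]
  exact hWsub (hN hker)
end

section
/- Every group of exponent dividing 3 is nilpotent of class at most 3. Consequently, if F is a free group and w = x³, then F/w(F) is nilpotent of class at most 3. -/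
/-!
In a group of exponent 3 any two conjugates of an element `a` commute, so the normal closure `N`
of `a` is abelian and conjugation turns it into a module on which every `g` satisfies
`1 + g + g² = 0` (expand `(u g)³ = 1`), i.e. `(g - 1)² = 0` because `3 = 0`. In characteristic 3
such unipotent operators pairwise anticommute, and all products of three of them vanish. Since
`⁅u, g⁆` is `(1 - g) u` on `N`, this gives `⁅⁅⁅a, b⁆, c⁆, d⁆ = (1 - d)(1 - c)(1 - b) a = 1`, so the
upper central series reaches `G` after three steps.
-/

open scoped commutatorElement IsMulCommutative

section Unipotent
variable {G R : Type*} [Group G] [Ring R] {ρ : G →* R}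

lemma sub_one_sq_eq_zero_of_one_add_add_sq_eq_zero (h3 : (3 : R) = 0) {a : R}
    (ha : 1 + a + a ^ 2 = 0) : (a - 1) ^ 2 = 0 := by
  linear_combination (norm := noncomm_ring) ha - h3 * a

lemma map_inv_eq_one_sub_of_sub_one_sq {k : G} (hk : (ρ k - 1) ^ 2 = 0) :
    ρ k⁻¹ = 1 - (ρ k - 1) := by
  have hright : ρ k * (1 - (ρ k - 1)) = 1 := by
    linear_combination (norm := noncomm_ring) -hk
  calc ρ k⁻¹ = ρ k⁻¹ * (ρ k * (1 - (ρ k - 1))) := by rw [hright, mul_one]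
    _ = 1 - (ρ k - 1) := by rw [← mul_assoc, ← map_mul, inv_mul_cancel, map_one, one_mul]

variable (h3 : (3 : R) = 0) (hρ : ∀ g, (ρ g - 1) ^ 2 = 0)
include h3 hρ

lemma sub_one_mul_sub_one_eq_neg_swap (g k : G) :
    (ρ g - 1) * (ρ k - 1) = -((ρ k - 1) * (ρ g - 1)) := by
  set u := ρ g - 1
  set v := ρ k - 1
  have hu : u * u = 0 := by rw [← sq]; exact hρ g
  have hgk : (u + v + u * v) ^ 2 = 0 := by
    convert hρ (g * k) using 2; rw [map_mul]; simp only [u, v]; noncomm_ring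
  have hgk' : (u - v - u * v) ^ 2 = 0 := by
    convert hρ (g * k⁻¹) using 2
    rw [map_mul, map_inv_eq_one_sub_of_sub_one_sq (hρ k)]; simp only [u, v]; noncomm_ring
  have hsum : u * v + v * u + u * v * u = 0 := by
    linear_combination (norm := noncomm_ring)
      hgk' - hgk + (u * v + v * u + u * v * u) * h3 + 2 * hu * v
  have huvu : u * v * u = 0 := by
    linear_combination (norm := noncomm_ring) u * hsum - hu * v - hu * v * u
  linear_combination (norm := noncomm_ring) hsum - huvu

theorem one_sub_mul_one_sub_mul_one_sub_eq_zero (g k l : G) :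
    (1 - ρ g) * (1 - ρ k) * (1 - ρ l) = 0 := by
  have hanti := sub_one_mul_sub_one_eq_neg_swap h3 hρ
  have hkl : ρ (k * l) - 1 = (ρ k - 1) + (ρ l - 1) + (ρ k - 1) * (ρ l - 1) := by
    rw [map_mul]; noncomm_ring
  have P := hanti g (k * l)
  rw [hkl] at P
  linear_combination (norm := noncomm_ring)
    -(ρ g - 1) * (ρ k - 1) * (ρ l - 1) * h3 + P - hanti g k - hanti g l
      - (ρ k - 1) * hanti g l + hanti g k * (ρ l - 1)

end Unipotent

section ExponentThree
variable {G : Type*} [Group G] (h : ∀ g : G, g ^ 3 = 1)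
include h

lemma mul_self_eq_inv (g : G) : g * g = g⁻¹ := by
  calc g * g = g ^ 3 * g⁻¹ := by rw [pow_three]; group
    _ = g⁻¹ := by rw [h, one_mul]

lemma mul_mul_eq_inv_mul_inv_mul_inv (x y : G) : x * y * x = y⁻¹ * x⁻¹ * y⁻¹ := by
  calc x * y * x = (x * y) ^ 3 * (y⁻¹ * x⁻¹ * y⁻¹) := by rw [pow_three]; group
    _ = y⁻¹ * x⁻¹ * y⁻¹ := by rw [h, one_mul]

lemma commute_self_conj (x g : G) : Commute x (g * x * g⁻¹) := by
  have hxg := mul_mul_eq_inv_mul_inv_mul_inv h x g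
  have hxg' : x * g⁻¹ * x = g * x⁻¹ * g := by
    simpa using mul_mul_eq_inv_mul_inv_mul_inv h x g⁻¹
  have hg : g⁻¹ * g⁻¹ = g := by simpa using mul_self_eq_inv h g⁻¹
  calc x * (g * x * g⁻¹) = (x * g * x) * g⁻¹ := by group
    _ = g⁻¹ * x⁻¹ * (g⁻¹ * g⁻¹) := by rw [hxg]; group
    _ = (g * g) * x⁻¹ * g := by rw [hg, mul_self_eq_inv h]
    _ = g * (x * g⁻¹ * x) := by rw [hxg']; group
    _ = g * x * g⁻¹ * x := by group

lemma commute_conj_conj (x g k : G) : Commute (g * x * g⁻¹) (k * x * k⁻¹) := by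
  have := (commute_self_conj h x (k⁻¹ * g)).symm.map (MulAut.conj k)
  simpa [mul_assoc] using this

lemma isMulCommutative_normalClosure_singleton (x : G) :
    IsMulCommutative (Subgroup.normalClosure {x}) := by
  apply Subgroup.isMulCommutative_closure
  simp only [Group.mem_conjugatesOfSet_iff, Set.mem_singleton_iff, exists_eq_left, isConj_iff]
  rintro _ ⟨g, rfl⟩ _ ⟨k, rfl⟩
  exact commute_conj_conj h x g k

end ExponentThree

lemma addMonoidEnd_three_eq_zero {A : Type*} [CommGroup A] (h : ∀ a : A, a ^ 3 = 1) :
    (3 : AddMonoid.End (Additive A)) = 0 := by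
  ext x
  exact h x.toMul

section ConjAction
variable {G : Type*} [Group G] (N : Subgroup G) [hN : N.Normal] [IsMulCommutative N]

def conjAddEnd : G →* AddMonoid.End (Additive N) where
  toFun g := AddMonoidHom.mk'
    (fun x => .ofMul ⟨g * x.toMul * g⁻¹, hN.conj_mem _ x.toMul.2 g⟩)
    fun x y => by ext; simp [mul_assoc]
  map_one' := AddMonoidHom.ext fun _ => Additive.toMul.injective <| Subtype.ext <|
    show (1 : G) * _ * 1⁻¹ = _ by rw [one_mul, inv_one, mul_one]; rfl
  map_mul' g k := AddMonoidHom.ext fun _ => Additive.toMul.injective <| Subtype.ext <|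
    show g * k * _ * (g * k)⁻¹ = g * (k * _ * k⁻¹) * g⁻¹ by group

lemma commutatorElement_eq_one_sub_conjAddEnd_apply (x : Additive N) (g : G) :
    ⁅(x.toMul : G), g⁆ = ((1 - conjAddEnd N g) x).toMul := by
  change _ = (x.toMul : G) / (g * x.toMul * g⁻¹)
  rw [commutatorElement_def, div_eq_mul_inv]
  group

variable {N}

lemma conjAddEnd_sub_one_sq (h : ∀ g : G, g ^ 3 = 1) (g : G) : (conjAddEnd N g - 1) ^ 2 = 0 := by
  refine sub_one_sq_eq_zero_of_one_add_add_sq_eq_zero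
    (addMonoidEnd_three_eq_zero fun x => Subtype.ext (h x)) ?_
  ext x
  change (x.toMul : G) * (g * x.toMul * g⁻¹) * (g * (g * x.toMul * g⁻¹) * g⁻¹) = 1
  calc _ = (x.toMul * g : G) ^ 3 * (g ^ 3)⁻¹ := by simp only [pow_three]; group
    _ = 1 := by rw [h, h, inv_one, one_mul]

end ConjAction

theorem commutatorElement_commutatorElement_commutatorElement_eq_one {G : Type*} [Group G]
    (h : ∀ g : G, g ^ 3 = 1) (a b c d : G) : ⁅⁅⁅a, b⁆, c⁆, d⁆ = 1 := by
  have := isMulCommutative_normalClosure_singleton h a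
  set ρ := conjAddEnd (Subgroup.normalClosure {a})
  have hρ : (1 - ρ d) * (1 - ρ c) * (1 - ρ b) = 0 :=
    one_sub_mul_one_sub_mul_one_sub_eq_zero (addMonoidEnd_three_eq_zero fun x => Subtype.ext (h x))
      (conjAddEnd_sub_one_sq (N := Subgroup.normalClosure {a}) h) d c b
  let x : Additive (Subgroup.normalClosure {a}) := .ofMul ⟨a, Subgroup.subset_normalClosure rfl⟩
  calc ⁅⁅⁅a, b⁆, c⁆, d⁆ = ⁅⁅⁅(x.toMul : G), b⁆, c⁆, d⁆ := rfl
    _ = ((((1 - ρ d) * (1 - ρ c) * (1 - ρ b)) x).toMul : G) := by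
      simp only [commutatorElement_eq_one_sub_conjAddEnd_apply]; rfl
    _ = 1 := by rw [hρ]; rfl

lemma Subgroup.upperCentralSeries_three_eq_top {G : Type*} [Group G]
    (h : ∀ a b c d : G, ⁅⁅⁅a, b⁆, c⁆, d⁆ = 1) : upperCentralSeries G 3 = ⊤ :=
  eq_top_iff.mpr fun a _ b c d => mem_bot.mpr (h a b c d)

lemma pow_eq_one_of_quotient_normalClosure {H : Type*} [Group H] (n : ℕ)
    (g : H ⧸ Subgroup.normalClosure {x : H | ∃ g : H, g ^ n = x}) : g ^ n = 1 := by
  induction g using QuotientGroup.induction_on with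
  | H x =>
    rw [← QuotientGroup.mk_pow, QuotientGroup.eq_one_iff]
    exact Subgroup.subset_normalClosure ⟨x, rfl⟩

theorem lowerCentralSeries_three_eq_bot_of_pow_three {G : Type*} [Group G]
    (h : ∀ g : G, g ^ 3 = 1) : (⊤ : Subgroup G).lowerCentralSeries 3 = ⊥ :=
  Subgroup.lowerCentralSeries_eq_bot_iff_upperCentralSeries_eq_top.mpr <|
    Subgroup.upperCentralSeries_three_eq_top <|
      commutatorElement_commutatorElement_commutatorElement_eq_one h

/-- Every group of exponent dividing 3 is nilpotent of class at most 3 (`γ₄ = 1`);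
consequently, for a free group `F` and `w = x³`, the quotient `F/w(F)` is nilpotent
of class at most 3. -/
theorem stmt12 :
    (∀ (G : Type) [Group G], (∀ g : G, g ^ 3 = 1) → (⊤ : Subgroup G).lowerCentralSeries 3 = ⊥) ∧
    (∀ (α : Type), (⊤ : Subgroup
      (FreeGroup α ⧸ Subgroup.normalClosure {x : FreeGroup α | ∃ g : FreeGroup α, g ^ 3 = x})).lowerCentralSeries
      3 = ⊥) :=
  ⟨fun _ _ => lowerCentralSeries_three_eq_bot_of_pow_three,
    fun _ => lowerCentralSeries_three_eq_bot_of_pow_three (pow_eq_one_of_quotient_normalClosure 3)⟩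
end

section
/- Every 2-Engel group, i.e. every group satisfying [x, y, y] = 1 for all x, y, is nilpotent of class at most 3. -/
/-!
In a 2-Engel group `x` commutes with `g * x * g⁻¹ = ⁅g, x⁆ * x`, so the normal closure of every
element is commutative; in particular two elements commute as soon as both lie in the normal
closure of one element. Linearising `⁅⁅x, y⁆, y⁆ = 1` at `y * z` then makes `⁅⁅x, y⁆, z⁆`
alternating, and the Hall–Witt identity gives `⁅⁅x, y⁆, z⁆ ^ 3 = 1`. Expanding `⁅⁅x, y⁆, w * z⁆`
in two ways expresses the weight-four commutator through a permutation of its arguments; with the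
alternation this shows that it is its own inverse. Being also a cube root of unity, it is trivial.
-/

open scoped commutatorElement

open Subgroup

section

variable {G : Type*} [Group G]

namespace Subgroup

variable {N : Subgroup G} [N.Normal] {a b : G}

@[simp]
theorem conj_mem_iff (g : G) : g * a * g⁻¹ ∈ N ↔ a ∈ N := by
  refine ⟨fun h => ?_, fun h => Normal.conj_mem ‹_› a h g⟩
  simpa [mul_assoc] using Normal.conj_mem ‹_› _ h g⁻¹

@[simp]
theorem commutatorElement_mem_of_mem_left (ha : a ∈ N) : ⁅a, b⁆ ∈ N := by
  rw [commutatorElement_def, mul_assoc, mul_assoc, ← mul_assoc b]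
  exact N.mul_mem ha (Normal.conj_mem ‹_› _ (N.inv_mem ha) b)

@[simp]
theorem commutatorElement_mem_of_mem_right (hb : b ∈ N) : ⁅a, b⁆ ∈ N :=
  N.mul_mem (Normal.conj_mem ‹_› b hb a) (N.inv_mem hb)

@[simp]
theorem mem_normalClosure_singleton_self (x : G) : x ∈ normalClosure ({x} : Set G) :=
  subset_normalClosure rfl

end Subgroup

theorem commutatorElement_mul_left_of_commute {a b c : G} (h : Commute a ⁅b, c⁆) :
    ⁅a * b, c⁆ = ⁅b, c⁆ * ⁅a, c⁆ := by
  rw [commutatorElement_mul_left_eq_conj_mul, h.eq, mul_inv_cancel_right]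

theorem commutatorElement_inv_left_of_commute {a b : G} (h : Commute a ⁅a, b⁆) :
    ⁅a⁻¹, b⁆ = ⁅a, b⁆⁻¹ := by
  rw [commutatorElement_inv_left, ← commutatorElement_inv, mul_assoc, ← h.inv_right.eq,
    inv_mul_cancel_left]

theorem commutatorElement_pow_left_of_commute {a b : G} (h : Commute a ⁅a, b⁆) (n : ℕ) :
    ⁅a ^ n, b⁆ = ⁅a, b⁆ ^ n := by
  induction n with
  | zero => simp
  | succ n ih =>
    rw [pow_succ', commutatorElement_mul_left_of_commute (by rw [ih]; exact h.pow_right n), ih,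
      pow_succ]

def IsTwoEngel (G : Type*) [Group G] : Prop := ∀ x y : G, ⁅⁅x, y⁆, y⁆ = 1

namespace IsTwoEngel

variable (hG : IsTwoEngel G)
include hG

theorem commute_conj (x g : G) : Commute x (g * x * g⁻¹) := by
  rw [← MulAut.conj_apply, conj_eq_commutatorElement_mul]
  exact ((commutatorElement_eq_one_iff_commute.mp (hG g x)).symm).mul_right (Commute.refl x)

theorem normalClosure_le_centralizer (x : G) :
    normalClosure {x} ≤ centralizer (normalClosure {x}) := by
  refine normalClosure_le_normal (Set.singleton_subset_iff.mpr ?_)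
  rw [SetLike.mem_coe, normalClosure, centralizer_closure, mem_centralizer_iff]
  intro c hc
  obtain ⟨_, hy, hxc⟩ := Group.mem_conjugatesOfSet_iff.mp hc
  rw [Set.mem_singleton_iff.mp hy] at hxc
  obtain ⟨g, rfl⟩ := isConj_iff.mp hxc
  exact (hG.commute_conj x g).eq.symm

theorem commute_of_mem_normalClosure {x a b : G} (ha : a ∈ normalClosure {x})
    (hb : b ∈ normalClosure {x}) : Commute a b :=
  (mem_centralizer_iff.mp (hG.normalClosure_le_centralizer x ha) b hb).symm

theorem comm₃_swap₂₃ (x y z : G) : ⁅⁅x, z⁆, y⁆ = ⁅⁅x, y⁆, z⁆⁻¹ := by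
  have hz : Commute z ⁅⁅x, z⁆, y⁆ := hG.commute_of_mem_normalClosure (x := z) (by simp) (by simp)
  have hc : Commute ⁅x, y⁆ (y * ⁅⁅x, z⁆, y⁆ * y⁻¹) :=
    hG.commute_of_mem_normalClosure (x := x) (by simp) (by simp)
  have expand : ⁅⁅x, y * z⁆, y * z⁆ = ⁅x, y⁆ * (y * (⁅⁅x, z⁆, z⁆ * (z * ⁅⁅x, z⁆, y⁆ * z⁻¹)) * y⁻¹) *
      ⁅x, y⁆⁻¹ * (⁅⁅x, y⁆, y⁆ * (y * ⁅⁅x, y⁆, z⁆ * y⁻¹)) := by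
    simp only [commutatorElement_def]; group
  rw [hG x (y * z), hG x z, hG x y, hz.mul_inv_cancel, one_mul, one_mul, hc.mul_inv_cancel,
    conj_mul, eq_comm] at expand
  rw [eq_inv_iff_mul_eq_one]
  simpa using expand

theorem commute_commutatorElement (x y : G) : Commute x ⁅x, y⁆ :=
  hG.commute_of_mem_normalClosure (x := x) (by simp) (by simp)

theorem comm₃_swap₁₂ (x y z : G) : ⁅⁅y, x⁆, z⁆ = ⁅⁅x, y⁆, z⁆⁻¹ := by
  rw [← commutatorElement_inv x y,
    commutatorElement_inv_left_of_commute (hG.commute_commutatorElement _ z)]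

theorem comm₃_rotate (x y z : G) : ⁅⁅z, x⁆, y⁆ = ⁅⁅x, y⁆, z⁆ := by
  rw [hG.comm₃_swap₁₂ x z y, hG.comm₃_swap₂₃ x y z, inv_inv]

theorem comm₃_conj_right (x y z : G) : ⁅⁅x, y⁆, y * z * y⁻¹⁆ = ⁅⁅x, y⁆, z⁆ := by
  have h₁ : Commute ⁅x, y⁆ ⁅y, z⁆ := hG.commute_of_mem_normalClosure (x := y) (by simp) (by simp)
  have h₂ : Commute ⁅y, z⁆ ⁅⁅x, y⁆, z⁆ :=
    hG.commute_of_mem_normalClosure (x := y) (by simp) (by simp)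
  rw [← MulAut.conj_apply, conj_eq_commutatorElement_mul, commutatorElement_mul_right_eq_mul_conj,
    commutatorElement_eq_one_iff_commute.mpr h₁, one_mul, h₂.mul_inv_cancel]

theorem comm₃_pow_three (x y z : G) : ⁅⁅x, y⁆, z⁆ ^ 3 = 1 := by
  have hallWitt := commutatorElement_commutatorElement_conj_mul x y z
  rwa [hG.comm₃_conj_right, hG.comm₃_conj_right, hG.comm₃_conj_right, hG.comm₃_rotate z x y,
    hG.comm₃_rotate x y z, ← pow_three'] at hallWitt

theorem comm₄_swap₁₂ (x y z w : G) : ⁅⁅⁅y, x⁆, z⁆, w⁆ = ⁅⁅⁅x, y⁆, z⁆, w⁆⁻¹ := by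
  rw [hG.comm₃_swap₁₂ x y z,
    commutatorElement_inv_left_of_commute (hG.commute_commutatorElement _ w)]

theorem comm₄_cycle (x y z w : G) : ⁅⁅⁅x, y⁆, z⁆, w⁆ = ⁅⁅⁅z, x⁆, w⁆, y⁆ := by
  have expand₁ : ⁅⁅x, y⁆, w * z⁆ = ⁅⁅x, y⁆, w⁆ * (⁅⁅⁅x, y⁆, z⁆, w⁆⁻¹ * ⁅⁅x, y⁆, z⁆) := by
    rw [commutatorElement_mul_right_eq_mul_conj, mul_assoc _ w, mul_assoc _ (w * _),
      ← MulAut.conj_apply, conj_eq_commutatorElement_mul, ← commutatorElement_inv _ w]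
  have h₁ : Commute (w * ⁅z, x⁆ * w⁻¹) ⁅⁅w, x⁆, y⁆ :=
    hG.commute_of_mem_normalClosure (x := x) (by simp) (by simp)
  have h₂ : Commute ⁅w, ⁅z, x⁆⁆ ⁅⁅z, x⁆, y⁆ :=
    hG.commute_of_mem_normalClosure (x := ⁅z, x⁆) (by simp) (by simp)
  have expand₂ : ⁅⁅x, y⁆, w * z⁆ = ⁅⁅x, y⁆, w⁆ * (⁅⁅x, y⁆, z⁆ * ⁅⁅⁅z, x⁆, w⁆, y⁆⁻¹) := by
    rw [← hG.comm₃_rotate x y (w * z), commutatorElement_mul_left_eq_conj_mul,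
      commutatorElement_mul_left_of_commute h₁, ← MulAut.conj_apply, conj_eq_commutatorElement_mul,
      commutatorElement_mul_left_of_commute h₂, hG.comm₃_swap₁₂ ⁅z, x⁆ w y, hG.comm₃_rotate x y w,
      hG.comm₃_rotate x y z]
  have h₃ := mul_left_cancel (expand₁.symm.trans expand₂)
  rw [← (hG.commute_commutatorElement _ w).inv_right.eq] at h₃
  exact inv_injective (mul_left_cancel h₃)

theorem comm₄_eq_one (x y z w : G) : ⁅⁅⁅x, y⁆, z⁆, w⁆ = 1 := by
  have h_inv : ⁅⁅⁅x, y⁆, z⁆, w⁆ = ⁅⁅⁅x, y⁆, z⁆, w⁆⁻¹ :=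
    calc ⁅⁅⁅x, y⁆, z⁆, w⁆ = ⁅⁅⁅w, z⁆, y⁆, x⁆ := by rw [hG.comm₄_cycle, hG.comm₄_cycle]
      _ = ⁅⁅⁅z, w⁆, y⁆, x⁆⁻¹ := hG.comm₄_swap₁₂ z w y x
      _ = ⁅⁅⁅x, y⁆, z⁆, w⁆⁻¹ := by
        rw [hG.comm₄_cycle, hG.comm₃_rotate z x y, hG.comm₃_rotate x y z]
  have h_sq : ⁅⁅⁅x, y⁆, z⁆, w⁆ ^ 2 = 1 := by rw [sq]; exact mul_eq_one_iff_eq_inv.mpr h_inv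
  have h_cube : ⁅⁅⁅x, y⁆, z⁆, w⁆ ^ 3 = 1 := by
    rw [← commutatorElement_pow_left_of_commute (hG.commute_commutatorElement _ w),
      hG.comm₃_pow_three, commutatorElement_one_left]
  exact (pow_eq_one_iff_of_coprime (by norm_num)).mp ⟨h_sq, h_cube⟩

end IsTwoEngel

end

/-- Every 2-Engel group, i.e. every group satisfying `[x,y,y] = 1` for all `x, y`,
is nilpotent of class at most 3 (`γ₄ = 1`). -/
theorem stmt13 (G : Type*) [Group G] (h : ∀ x y : G, ⁅⁅x, y⁆, y⁆ = 1) :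
    (⊤ : Subgroup G).lowerCentralSeries 3 = ⊥ := by
  have hG : IsTwoEngel G := h
  rw [lowerCentralSeries_eq_bot_iff_upperCentralSeries_eq_top, eq_top_iff]
  intro x _
  simp only [Subgroup.mem_upperCentralSeries_succ_iff, Subgroup.upperCentralSeries_zero, mem_bot]
  exact hG.comm₄_eq_one x
end

section
/- Let G be a group and let X ⊆ G be a finite normal subset (closed under conjugation by G) all of whose elements have finite order. Then the subgroup generated by X is a finite normal subgroup of G (Dicman's Lemma). -/
/-!
A product of elements of `X` can be rewritten, by pushing the occurrences of a chosen `y ∈ X`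
to the front, as `y ^ k` times a product of conjugates of elements of `X`, which again lie
in `X`. So once a word over `X` is longer than `∑_{y ∈ X} orderOf y`, some letter `y` occurs
at least `orderOf y` times and the word can be shortened without changing its value. Since
inverses of torsion elements are positive powers, `⟨X⟩` consists of the values of words of
bounded length over the finite alphabet `X`.
-/

theorem List.exists_le_count_of_sum_lt_length {α : Type*} [DecidableEq α] {s : Finset α}
    {l : List α} (f : α → ℕ) (hl : ∀ x ∈ l, x ∈ s) (hlen : ∑ y ∈ s, f y < l.length) :
    ∃ y ∈ s, f y ≤ l.count y := by
  by_contra! h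
  have hcount : ∑ y ∈ s, l.count y ≤ ∑ y ∈ s, f y :=
    Finset.sum_le_sum fun y hy => (h y hy).le
  rw [← Multiset.coe_card, ← Multiset.sum_count_eq_card (m := (l : Multiset α)) hl] at hlen
  simp only [Multiset.coe_count] at hlen
  omega

section Dicman

variable {G : Type*} [Group G] {X : Set G}

theorem Subgroup.normal_closure_of_conj_mem (hX : ∀ g : G, ∀ x ∈ X, g⁻¹ * x * g ∈ X) :
    (closure X).Normal := by
  rw [← normalizer_eq_top_iff, eq_top_iff, le_normalizer_closure_iff]
  intro h _ x hx
  simpa using subset_closure (hX h⁻¹ x hx)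

theorem List.exists_prod_eq_pow_count_mul [DecidableEq G]
    (hX : ∀ g : G, ∀ x ∈ X, g⁻¹ * x * g ∈ X) (y : G) :
    ∀ l : List G, (∀ x ∈ l, x ∈ X) → ∃ l' : List G, (∀ x ∈ l', x ∈ X) ∧
      l'.length + l.count y = l.length ∧ l.prod = y ^ l.count y * l'.prod
  | [], _ => ⟨[], by simp, by simp, by simp⟩
  | a :: t, hl => by
    obtain ⟨t', ht'X, ht'len, ht'prod⟩ :=
      exists_prod_eq_pow_count_mul hX y t fun x hx => hl x (mem_cons_of_mem a hx)
    by_cases hay : a = y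
    · subst hay
      refine ⟨t', ht'X, by simp only [count_cons_self, length_cons, ← ht'len]; omega, ?_⟩
      rw [count_cons_self, prod_cons, ht'prod, pow_succ', mul_assoc]
    · refine ⟨((y ^ t.count y)⁻¹ * a * y ^ t.count y) :: t', ?_, ?_, ?_⟩
      · rintro x (_ | ⟨_, hx⟩)
        exacts [hX _ a (hl a mem_cons_self), ht'X x hx]
      · simp only [count_cons_of_ne hay, length_cons, ← ht'len]; omega
      · rw [count_cons_of_ne hay, prod_cons, prod_cons, ht'prod]
        group

theorem List.exists_length_le_sum_orderOf_prod_eq [DecidableEq G] (hfin : X.Finite)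
    (hX : ∀ g : G, ∀ x ∈ X, g⁻¹ * x * g ∈ X) (htors : ∀ x ∈ X, IsOfFinOrder x)
    (l : List G) (hl : ∀ x ∈ l, x ∈ X) :
    ∃ l' : List G, (∀ x ∈ l', x ∈ X) ∧ l'.length ≤ ∑ y ∈ hfin.toFinset, orderOf y ∧
      l'.prod = l.prod := by
  induction hn : l.length using Nat.strong_induction_on generalizing l with
  | _ n ih =>
    by_cases hshort : l.length ≤ ∑ y ∈ hfin.toFinset, orderOf y
    · exact ⟨l, hl, hshort, rfl⟩
    obtain ⟨y, hyX, hy⟩ := exists_le_count_of_sum_lt_length orderOf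
      (fun x hx => hfin.mem_toFinset.2 (hl x hx)) (not_le.1 hshort)
    have hyX : y ∈ X := hfin.mem_toFinset.1 hyX
    have hpos := (htors y hyX).orderOf_pos
    obtain ⟨l', hl'X, hl'len, hl'prod⟩ := exists_prod_eq_pow_count_mul hX y l hl
    have hprod : (replicate (l.count y - orderOf y) y ++ l').prod = l.prod := by
      rw [hl'prod, prod_append, prod_replicate, ← Nat.sub_add_cancel hy, pow_add,
        pow_orderOf_eq_one, mul_one, Nat.add_sub_cancel]
    obtain ⟨l'', hl''X, hl''len, hl''prod⟩ :=
      ih _ (by simp only [length_append, length_replicate]; omega)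
        (replicate (l.count y - orderOf y) y ++ l')
        (by simpa [or_imp, forall_and, eq_of_mem_replicate] using ⟨fun _ => hyX, hl'X⟩) rfl
    exact ⟨l'', hl''X, hl''len, hl''prod.trans hprod⟩

theorem Subgroup.finite_closure_of_conj_mem (hfin : X.Finite)
    (hX : ∀ g : G, ∀ x ∈ X, g⁻¹ * x * g ∈ X) (htors : ∀ x ∈ X, IsOfFinOrder x) :
    (closure X : Set G).Finite := by
  classical
  have : Finite X := hfin.to_subtype
  refine ((List.finite_length_le X (∑ y ∈ hfin.toFinset, orderOf y)).image
    fun l => (l.map (↑)).prod).subset ?_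
  intro g hg
  rw [SetLike.mem_coe, ← mem_toSubmonoid, closure_toSubmonoid_of_isOfFinOrder htors] at hg
  obtain ⟨l, hlX, rfl⟩ := Submonoid.exists_list_of_mem_closure hg
  obtain ⟨l', hl'X, hl'len, hl'prod⟩ :=
    List.exists_length_le_sum_orderOf_prod_eq hfin hX htors l hlX
  lift l' to List X using hl'X
  exact ⟨l', by simpa using hl'len, hl'prod⟩

end Dicman

/-- Dicman's Lemma: if `X` is a finite normal subset of a group `G` all of whose
elements have finite order, then `⟨X⟩` is a finite normal subgroup of `G`. -/
theorem stmt17 {G : Type*} [Group G] (X : Set G) (hfin : X.Finite)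
    (hnorm : ∀ g : G, ∀ x ∈ X, g⁻¹ * x * g ∈ X)
    (htors : ∀ x ∈ X, IsOfFinOrder x) :
    (Subgroup.closure X).Normal ∧ Finite ↥(Subgroup.closure X) :=
  ⟨Subgroup.normal_closure_of_conj_mem hnorm,
    (Subgroup.finite_closure_of_conj_mem hfin hnorm htors).to_subtype⟩
end
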